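/- Suppose c ≠ 0. The dual multiplier map w: ℝⁿ → ℝ (the unique solution of f(x,w(x)) = c) is Lipschitz continuous on ℝⁿ. -/

import Mathlib

open Finset

/-- Scalar soft-thresholding: `Prox_{λ|·|}(t) = sign(t)·(|t|-λ)₊`. -/
noncomputable def st (lam t : ℝ) : ℝ := Real.sign t * max (|t| - lam) 0

lemma st_eq (lam t : ℝ) (hlam : 0 ≤ lam) : st lam t = t - max (-lam) (min lam t) := by
  simp only [st, max_def, min_def]
  rcases lt_trichotomy t 0 with h | h | h
  · rw [Real.sign_of_neg h, abs_of_neg h]; split_ifs <;> linarith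
  · rw [h, Real.sign_zero, abs_zero]; split_ifs <;> linarith
  · rw [Real.sign_of_pos h, abs_of_pos h]; split_ifs <;> linarith

lemma st_mono (lam : ℝ) (hlam : 0 ≤ lam) : Monotone (st lam) := by
  intro a b hab
  simp only [st_eq lam _ hlam, max_def, min_def]
  split_ifs <;> linarith

lemma st_lip (lam a b : ℝ) (hlam : 0 ≤ lam) : |st lam a - st lam b| ≤ |a - b| := by
  simp only [st_eq lam _ hlam, max_def, min_def, abs_le]
  rcases abs_cases (a - b) with ⟨h1, h2⟩ | ⟨h1, h2⟩ <;> rw [h1] <;>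
    constructor <;> split_ifs <;> linarith

lemma st_slope (lam a b : ℝ) (hlam : 0 ≤ lam) (ha : lam ≤ |a|) (hb : |b - a| ≤ |a| - lam) :
    st lam b - st lam a = b - a := by
  simp only [st_eq lam _ hlam, max_def, min_def]
  rcases abs_cases a with ⟨h1, h2⟩ | ⟨h1, h2⟩ <;> rw [h1] at ha hb <;>
    rcases abs_cases (b - a) with ⟨h3, h4⟩ | ⟨h3, h4⟩ <;> rw [h3] at hb <;>
    split_ifs <;> linarith

lemma st_abs_le (lam t : ℝ) : |st lam t| ≤ max (|t| - lam) 0 := by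
  rw [st, abs_mul]
  have h1 : |Real.sign t| ≤ 1 := by
    rcases Real.sign_apply_eq t with h | h | h <;> rw [h] <;> norm_num
  have h2 : |max (|t| - lam) 0| = max (|t| - lam) 0 := abs_of_nonneg (le_max_right _ _)
  rw [h2]
  nlinarith [le_max_right (|t| - lam) (0:ℝ), abs_nonneg (Real.sign t)]

set_option maxHeartbeats 1000000 in
/-- With `c ≠ 0`, the dual multiplier map `w(·)` is Lipschitz continuous on `ℝⁿ`. -/
theorem stmt7 (n : ℕ) (μ : Fin n → ℝ) (hμ : ∀ i, μ i ≠ 0)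
    (lam : ℝ) (hlam : 0 < lam) (c : ℝ) (hc : c ≠ 0)
    (w : (Fin n → ℝ) → ℝ)
    (hw : ∀ y : Fin n → ℝ, ∑ i, μ i * st lam (y i - w y * μ i) = c) :
    ∃ K : NNReal, LipschitzWith K w := by
  rcases Nat.eq_zero_or_pos n with hn | hn
  · exfalso; apply hc
    have h0 := hw 0
    subst hn
    rw [Finset.univ_eq_empty, Finset.sum_empty] at h0
    exact h0.symm
  haveI : Nonempty (Fin n) := ⟨⟨0, hn⟩⟩
  obtain ⟨iM, -, hM⟩ := Finset.exists_max_image (univ : Finset (Fin n)) (fun i => |μ i|) univ_nonempty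
  obtain ⟨im, -, hm⟩ := Finset.exists_min_image (univ : Finset (Fin n)) (fun i => |μ i|) univ_nonempty
  set M := |μ iM| with hMdef
  set m := |μ im| with hmdef
  have hM' : ∀ j, |μ j| ≤ M := fun j => hM j (mem_univ j)
  have hm' : ∀ j, m ≤ |μ j| := fun j => hm j (mem_univ j)
  have hm0 : 0 < m := abs_pos.mpr (hμ im)
  have hM0 : 0 < M := lt_of_lt_of_le hm0 (hm' iM)
  set S : ℝ := ∑ i, |μ i| with hS
  have hS0 : 0 < S := Finset.sum_pos (fun i _ => abs_pos.mpr (hμ i)) univ_nonempty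
  set δ : ℝ := |c| / S with hδ
  have hδ0 : 0 < δ := div_pos (abs_pos.mpr hc) hS0
  set F : (Fin n → ℝ) → ℝ → ℝ := fun x u => ∑ i, μ i * st lam (x i - u * μ i) with hF
  have hFc : ∀ x, F x (w x) = c := hw
  -- Lipschitz in x
  have L1 : ∀ x y u, |F x u - F y u| ≤ M * ∑ i, |x i - y i| := by
    intro x y u
    rw [hF]
    simp only
    rw [← Finset.sum_sub_distrib]
    calc |∑ i, (μ i * st lam (x i - u * μ i) - μ i * st lam (y i - u * μ i))|
        ≤ ∑ i, |μ i * st lam (x i - u * μ i) - μ i * st lam (y i - u * μ i)| :=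
          Finset.abs_sum_le_sum_abs _ _
      _ ≤ ∑ i, M * |x i - y i| := by
          apply Finset.sum_le_sum
          intro i _
          rw [← mul_sub, abs_mul]
          have h1 := st_lip lam (x i - u * μ i) (y i - u * μ i) hlam.le
          have e : (x i - u * μ i) - (y i - u * μ i) = x i - y i := by ring
          rw [e] at h1
          exact mul_le_mul (hM' i) h1 (abs_nonneg _) hM0.le
      _ = M * ∑ i, |x i - y i| := (Finset.mul_sum _ _ _).symm
  -- termwise antitone in u
  have L2 : ∀ (x : Fin n → ℝ) (i : Fin n) (u v : ℝ), u ≤ v →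
      μ i * st lam (x i - v * μ i) ≤ μ i * st lam (x i - u * μ i) := by
    intro x i u v huv
    rcases (hμ i).lt_or_gt with h | h
    · have h2 : x i - u * μ i ≤ x i - v * μ i := by nlinarith
      exact mul_le_mul_of_nonpos_left (st_mono lam hlam.le h2) h.le
    · have h2 : x i - v * μ i ≤ x i - u * μ i := by nlinarith
      exact mul_le_mul_of_nonneg_left (st_mono lam hlam.le h2) h.le
  have L2' : ∀ (x : Fin n → ℝ) (u v : ℝ), u ≤ v → F x v ≤ F x u := by
    intro x u v huv
    exact Finset.sum_le_sum fun i _ => L2 x i u v huv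
  -- local lower slope
  have L3 : ∀ (x : Fin n → ℝ) (u : ℝ), |u - w x| ≤ δ / M → m ^ 2 * |u - w x| ≤ |F x u - c| := by
    intro x u hu
    obtain ⟨i, hi⟩ : ∃ i, δ ≤ |x i - w x * μ i| - lam := by
      by_contra hcon
      push_neg at hcon
      have hlt : ∀ i ∈ (univ : Finset (Fin n)),
          |μ i * st lam (x i - w x * μ i)| < |μ i| * δ := by
        intro i _
        rw [abs_mul]
        apply mul_lt_mul_of_pos_left _ (abs_pos.mpr (hμ i))
        exact lt_of_le_of_lt (st_abs_le lam _) (max_lt (by linarith [hcon i]) hδ0)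
      have h1 : |c| < S * δ := by
        calc |c| = |F x (w x)| := by rw [hFc]
          _ ≤ ∑ i, |μ i * st lam (x i - w x * μ i)| := Finset.abs_sum_le_sum_abs _ _
          _ < ∑ i, |μ i| * δ := Finset.sum_lt_sum_of_nonempty univ_nonempty hlt
          _ = S * δ := by rw [hS, Finset.sum_mul]
      rw [hδ] at h1
      rw [mul_div_cancel₀ _ (ne_of_gt hS0)] at h1
      exact lt_irrefl _ h1
    have hlamle : lam ≤ |x i - w x * μ i| := by linarith
    have hmμ2 : m ^ 2 ≤ μ i ^ 2 := by nlinarith [hm' i, abs_nonneg (μ i), sq_abs (μ i)]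
    rcases le_total (w x) u with hcase | hcase
    · have habs : |u - w x| = u - w x := abs_of_nonneg (by linarith)
      have hclose : |(x i - u * μ i) - (x i - w x * μ i)| ≤ |x i - w x * μ i| - lam := by
        have e : (x i - u * μ i) - (x i - w x * μ i) = -((u - w x) * μ i) := by ring
        rw [e, abs_neg, abs_mul, abs_of_nonneg (by linarith : (0:ℝ) ≤ u - w x)]
        calc (u - w x) * |μ i| ≤ (δ / M) * M := by
              apply mul_le_mul _ (hM' i) (abs_nonneg _) (by positivity)
              rw [← habs]; exact hu
          _ = δ := by field_simp
          _ ≤ |x i - w x * μ i| - lam := hi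
      have hst := st_slope lam (x i - w x * μ i) (x i - u * μ i) hlam.le hlamle hclose
      have hterm : m ^ 2 * (u - w x) ≤
          μ i * st lam (x i - w x * μ i) - μ i * st lam (x i - u * μ i) := by
        have e : μ i * st lam (x i - w x * μ i) - μ i * st lam (x i - u * μ i)
            = μ i * (st lam (x i - w x * μ i) - st lam (x i - u * μ i)) := by ring
        rw [e]
        have e2 : st lam (x i - w x * μ i) - st lam (x i - u * μ i)
            = (u - w x) * μ i := by linarith [hst]
        rw [e2]
        nlinarith
      have hsum : μ i * st lam (x i - w x * μ i) - μ i * st lam (x i - u * μ i)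
          ≤ F x (w x) - F x u := by
        rw [hF]; simp only
        rw [← Finset.sum_sub_distrib]
        exact Finset.single_le_sum
          (f := fun j => μ j * st lam (x j - w x * μ j) - μ j * st lam (x j - u * μ j))
          (fun j _ => sub_nonneg.mpr (L2 x j (w x) u hcase)) (mem_univ i)
      rw [habs]
      have h3 : m ^ 2 * (u - w x) ≤ c - F x u := by
        rw [← hFc x]; linarith
      calc m ^ 2 * (u - w x) ≤ c - F x u := h3
        _ ≤ |F x u - c| := by rw [abs_sub_comm]; exact le_abs_self _
    · have habs : |u - w x| = w x - u := by rw [abs_sub_comm]; exact abs_of_nonneg (by linarith)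
      have hclose : |(x i - u * μ i) - (x i - w x * μ i)| ≤ |x i - w x * μ i| - lam := by
        have e : (x i - u * μ i) - (x i - w x * μ i) = (w x - u) * μ i := by ring
        rw [e, abs_mul, abs_of_nonneg (by linarith : (0:ℝ) ≤ w x - u)]
        calc (w x - u) * |μ i| ≤ (δ / M) * M := by
              apply mul_le_mul _ (hM' i) (abs_nonneg _) (by positivity)
              rw [← habs]; exact hu
          _ = δ := by field_simp
          _ ≤ |x i - w x * μ i| - lam := hi
      have hst := st_slope lam (x i - w x * μ i) (x i - u * μ i) hlam.le hlamle hclose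
      have hterm : m ^ 2 * (w x - u) ≤
          μ i * st lam (x i - u * μ i) - μ i * st lam (x i - w x * μ i) := by
        have e : μ i * st lam (x i - u * μ i) - μ i * st lam (x i - w x * μ i)
            = μ i * (st lam (x i - u * μ i) - st lam (x i - w x * μ i)) := by ring
        rw [e, hst]
        have e2 : (x i - u * μ i) - (x i - w x * μ i) = (w x - u) * μ i := by ring
        rw [e2]
        nlinarith
      have hsum : μ i * st lam (x i - u * μ i) - μ i * st lam (x i - w x * μ i)
          ≤ F x u - F x (w x) := by
        rw [hF]; simp only
        rw [← Finset.sum_sub_distrib]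
        exact Finset.single_le_sum
          (f := fun j => μ j * st lam (x j - u * μ j) - μ j * st lam (x j - w x * μ j))
          (fun j _ => sub_nonneg.mpr (L2 x j u (w x) hcase)) (mem_univ i)
      rw [habs]
      have h3 : m ^ 2 * (w x - u) ≤ F x u - c := by
        rw [← hFc x]; linarith
      calc m ^ 2 * (w x - u) ≤ F x u - c := h3
        _ ≤ |F x u - c| := le_abs_self _
  -- local Lipschitz bound
  have L4 : ∀ x y : Fin n → ℝ, (∑ i, |x i - y i|) < m ^ 2 * δ / M ^ 2 →
      |w x - w y| ≤ (M / m ^ 2) * ∑ i, |x i - y i| := by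
    intro x y hd
    set d1 := ∑ i, |x i - y i| with hd1def
    have hd1 : 0 ≤ d1 := Finset.sum_nonneg fun i _ => abs_nonneg _
    have key : |F x (w y) - c| ≤ M * d1 := by
      rw [← hw y]
      exact L1 x y (w y)
    rcases le_or_gt (|w y - w x|) (δ / M) with hcase | hcase
    · have h1 := L3 x (w y) hcase
      have h2 : m ^ 2 * |w y - w x| ≤ M * d1 := le_trans h1 key
      rw [abs_sub_comm]
      rw [← le_div_iff₀' (by positivity : (0:ℝ) < m ^ 2)] at h2
      calc |w y - w x| ≤ M * d1 / m ^ 2 := h2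
        _ = (M / m ^ 2) * d1 := by ring
    · exfalso
      have hbig : M * d1 < m ^ 2 * (δ / M) := by
        have : M * d1 < M * (m ^ 2 * δ / M ^ 2) := by
          exact mul_lt_mul_of_pos_left hd hM0
        calc M * d1 < M * (m ^ 2 * δ / M ^ 2) := this
          _ = m ^ 2 * (δ / M) := by field_simp
      rcases le_total (w x) (w y) with ho | ho
      · set u := w x + δ / M with hudef
        have huabs : |u - w x| = δ / M := by
          rw [hudef]; simp; positivity
        have h3 := L3 x u (le_of_eq huabs)
        rw [huabs] at h3
        have hle : u ≤ w y := by
          have h4 : δ / M < |w y - w x| := hcase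
          rw [abs_of_nonneg (by linarith)] at h4
          rw [hudef]; linarith
        have h4 : F x (w y) ≤ F x u := L2' x u (w y) hle
        have h5 : F x u ≤ c := by
          rw [← hFc x]
          exact L2' x (w x) u (by rw [hudef]; linarith [le_of_lt (by positivity : (0:ℝ) < δ / M)])
        have h6 : |F x u - c| = c - F x u := by
          rw [abs_sub_comm]; exact abs_of_nonneg (by linarith)
        rw [h6] at h3
        have h7 : m ^ 2 * (δ / M) ≤ c - F x (w y) := by linarith
        have h8 : c - F x (w y) ≤ M * d1 := by
          calc c - F x (w y) ≤ |F x (w y) - c| := by rw [abs_sub_comm]; exact le_abs_self _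
            _ ≤ M * d1 := key
        linarith
      · set u := w x - δ / M with hudef
        have huabs : |u - w x| = δ / M := by
          rw [hudef, show w x - δ / M - w x = -(δ / M) by ring, abs_neg,
            abs_of_nonneg (by positivity : (0:ℝ) ≤ δ / M)]
        have h3 := L3 x u (le_of_eq huabs)
        rw [huabs] at h3
        have hle : w y ≤ u := by
          have h4 : δ / M < |w y - w x| := hcase
          rw [abs_of_nonpos (by linarith), neg_sub] at h4
          rw [hudef]; linarith
        have h4 : F x u ≤ F x (w y) := L2' x (w y) u hle
        have h5 : c ≤ F x u := by
          rw [← hFc x]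
          exact L2' x u (w x) (by rw [hudef]; linarith [le_of_lt (by positivity : (0:ℝ) < δ / M)])
        have h6 : |F x u - c| = F x u - c := abs_of_nonneg (by linarith)
        rw [h6] at h3
        have h7 : m ^ 2 * (δ / M) ≤ F x (w y) - c := by linarith
        have h8 : F x (w y) - c ≤ M * d1 := le_trans (le_abs_self _) key
        linarith
  clear_value F
  clear_value S
  clear_value M
  clear_value m
  clear_value δ
  -- global
  set K : ℝ := (n : ℝ) * (M / m ^ 2) with hK
  have hK0 : (0:ℝ) ≤ K := by positivity
  refine ⟨Real.toNNReal K, ?_⟩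
  rw [lipschitzWith_iff_dist_le_mul]
  intro x y
  rw [Real.coe_toNNReal K hK0]
  by_cases hxy : x = y
  · simp [hxy]
  set d1 := ∑ i, |x i - y i| with hd1def
  have hd1 : 0 ≤ d1 := Finset.sum_nonneg fun i _ => abs_nonneg _
  have hd1dist : d1 ≤ n * dist x y := by
    calc d1 = ∑ i, dist (x i) (y i) := by simp [hd1def, Real.dist_eq]
      _ ≤ ∑ _i : Fin n, dist x y := Finset.sum_le_sum fun i _ => dist_le_pi_dist x y i
      _ = n * dist x y := by rw [Finset.sum_const, Finset.card_univ, Fintype.card_fin, nsmul_eq_mul]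
  set r0 : ℝ := m ^ 2 * δ / M ^ 2 with hr0def
  have hr0 : 0 < r0 := by positivity
  set N : ℕ := ⌈d1 / r0⌉₊ + 1 with hNdef
  clear_value N
  have hN0 : (0:ℝ) < N := by
    have hN0' : 0 < N := by rw [hNdef]; omega
    exact_mod_cast hN0'
  have hNd : d1 / N < r0 := by
    rw [div_lt_iff₀ hN0]
    have h1 : d1 / r0 < N := by
      calc d1 / r0 ≤ (⌈d1 / r0⌉₊ : ℝ) := Nat.le_ceil _
        _ < N := by rw [hNdef]; exact_mod_cast Nat.lt_succ_self _
    calc d1 = (d1 / r0) * r0 := by field_simp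
      _ < N * r0 := mul_lt_mul_of_pos_right h1 hr0
      _ = r0 * N := by ring
  set p : ℕ → (Fin n → ℝ) := fun k => x + ((k : ℝ) / N) • (y - x) with hp
  have hp0 : p 0 = x := by simp [hp]
  have hpN : p N = y := by
    rw [hp]
    simp only
    rw [div_self (ne_of_gt hN0)]
    funext i
    simp
  have hstep : ∀ k : ℕ, ∑ i, |p k i - p (k + 1) i| = d1 / N := by
    intro k
    have e : ∀ i, p k i - p (k + 1) i = (1 / (N:ℝ)) * (x i - y i) := by
      intro i
      simp only [hp, Pi.add_apply, Pi.smul_apply, Pi.sub_apply, smul_eq_mul]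
      push_cast
      field_simp
      ring
    calc (∑ i, |p k i - p (k + 1) i|) = ∑ i, (1 / (N:ℝ)) * |x i - y i| := by
          apply Finset.sum_congr rfl
          intro i _
          rw [e i, abs_mul, abs_of_nonneg (by positivity : (0:ℝ) ≤ 1 / (N:ℝ))]
      _ = (1 / (N:ℝ)) * d1 := by rw [← Finset.mul_sum, hd1def]
      _ = d1 / N := by ring
  have hlocstep : ∀ k : ℕ, dist (w (p k)) (w (p (k + 1))) ≤ (M / m ^ 2) * (d1 / N) := by
    intro k
    rw [Real.dist_eq]
    have h1 := L4 (p k) (p (k + 1)) (by rw [hstep k]; exact hNd)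
    rw [hstep k] at h1
    exact h1
  calc dist (w x) (w y) = dist (w (p 0)) (w (p N)) := by rw [hp0, hpN]
    _ ≤ ∑ k ∈ Finset.range N, dist (w (p k)) (w (p (k + 1))) :=
        dist_le_range_sum_dist (fun k => w (p k)) N
    _ ≤ ∑ _k ∈ Finset.range N, (M / m ^ 2) * (d1 / N) :=
        Finset.sum_le_sum fun k _ => hlocstep k
    _ = (M / m ^ 2) * d1 := by
        rw [Finset.sum_const, Finset.card_range, nsmul_eq_mul]
        field_simp
    _ ≤ K * dist x y := by
        rw [hK]
        calc (M / m ^ 2) * d1 ≤ (M / m ^ 2) * (n * dist x y) :=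
              mul_le_mul_of_nonneg_left hd1dist (by positivity)
          _ = (n : ℝ) * (M / m ^ 2) * dist x y := by ring
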